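/- arXiv:1904.06922 — 8 statements merged into one kernel-verified Lean document; each statement's English description precedes it below -/
import Mathlib

section
/- Fix a finite set P of points with a linking number function J on ordered pairs. On the commutative polynomial ring Z(P) = K[xy : x,y ∈ P]/(xx = 0 for x ∈ P), the swapping bracket defined on generators by {rx, sy} = J(rx,sy)·(ry·sx) and extended by the Leibniz rule is a well-defined biderivation that is antisymmetric: {A, B} = −{B, A} for all A, B. -/
/-!
A bracket on a polynomial ring that is a derivation in each argument is determined by its
values on pairs of variables, and any family of values extends: fixing the second argument,
the values on variables define a derivation by `MvPolynomial.mkDerivation`, and this derivation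
depends on the second argument through derivations again. Two such brackets that agree on pairs
of variables agree everywhere, so antisymmetry reduces to generators. There it is the identity
J(rx,sy) = -J(sy,rx), checked by cases on the order of the four points, unless ry or sx is a
degenerate generator, in which case both sides vanish.
-/

/-- The sign function, valued in ℚ. -/
noncomputable def sgnq (a : ℝ) : ℚ := if a < 0 then -1 else if a = 0 then 0 else 1

/-- The linking number J(rx, sy), valued in ℚ. -/
noncomputable def Jlink (r x s y : ℝ) : ℚ :=
  (1/2) * sgnq (r-x) * sgnq (r-y) * sgnq (y-x) - (1/2) * sgnq (r-x) * sgnq (r-s) * sgnq (s-x)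

/-- The swapping ring Z(P) = K[xy : x,y ∈ P]/(xx = 0): the polynomial ring over K in
variables indexed by ordered pairs of distinct points of P. -/
abbrev SwapRing (K : Type) [Field K] (ι : Type) : Type :=
  MvPolynomial {p : ι × ι // p.1 ≠ p.2} K

open scoped Classical in
/-- The generator xy ∈ Z(P) (zero when x = y). -/
noncomputable def gen {K : Type} [Field K] {ι : Type} (x y : ι) : SwapRing K ι :=
  if h : x = y then 0 else MvPolynomial.X ⟨(x, y), h⟩

lemma sgnq_sub_of_lt {a b : ℝ} (h : a < b) : sgnq (a - b) = -1 := by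
  simp [sgnq, sub_neg.mpr h]

lemma sgnq_sub_of_gt {a b : ℝ} (h : b < a) : sgnq (a - b) = 1 := by
  simp [sgnq, (sub_pos.mpr h).not_gt, (sub_pos.mpr h).ne']

lemma sgnq_zero : sgnq 0 = 0 := by
  simp [sgnq]

lemma sgnq_sub_comm (a b : ℝ) : sgnq (b - a) = -sgnq (a - b) := by
  rcases lt_trichotomy a b with h | rfl | h
  · rw [sgnq_sub_of_lt h, sgnq_sub_of_gt h]; norm_num
  · simp [sgnq_zero]
  · rw [sgnq_sub_of_gt h, sgnq_sub_of_lt h]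

lemma Jlink_self_left (r s y : ℝ) : Jlink r r s y = 0 := by
  simp [Jlink, sgnq_zero]

lemma Jlink_self_right (r x s : ℝ) : Jlink r x s s = 0 := by
  unfold Jlink; ring

lemma Jlink_antisymm {r x s y : ℝ} (hrx : r ≠ x) (hsy : s ≠ y) (hry : r ≠ y) (hsx : s ≠ x) :
    Jlink r x s y = -Jlink s y r x := by
  unfold Jlink
  by_cases hrs : r = s
  · subst hrs
    rw [sub_self, sgnq_zero, sgnq_sub_comm x y, sgnq_sub_comm x r, sgnq_sub_comm y r]
    ring
  by_cases hxy : x = y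
  · subst hxy
    rw [sub_self, sgnq_zero, sgnq_sub_comm r s]
    ring
  rcases hrx.lt_or_gt with h1 | h1 <;> rcases hry.lt_or_gt with h2 | h2 <;>
  rcases Ne.lt_or_gt hrs with h3 | h3 <;> rcases hsx.lt_or_gt with h4 | h4 <;>
  rcases hsy.lt_or_gt with h5 | h5 <;> rcases Ne.lt_or_gt hxy with h6 | h6 <;>
  first
  | linarith
  | simp only [sgnq_sub_of_lt h1, sgnq_sub_of_gt h1,
      sgnq_sub_of_lt h2, sgnq_sub_of_gt h2, sgnq_sub_of_lt h3, sgnq_sub_of_gt h3,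
      sgnq_sub_of_lt h4, sgnq_sub_of_gt h4, sgnq_sub_of_lt h5, sgnq_sub_of_gt h5,
      sgnq_sub_of_lt h6, sgnq_sub_of_gt h6]; norm_num

namespace MvPolynomial

variable {R σ : Type*} [CommRing R] (E : σ → σ → MvPolynomial σ R)

/-- The derivation `p ↦ {p, q}` of the bracket determined by `{X v, X w} = E v w`. -/
noncomputable def leibnizBracketLeft :
    MvPolynomial σ R →ₗ[R] Derivation R (MvPolynomial σ R) (MvPolynomial σ R) :=
  (mkDerivationEquiv R).toLinearMap ∘ₗ LinearMap.pi fun v => (mkDerivation R (E v)).toLinearMap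

theorem leibnizBracketLeft_X_X (v w : σ) : leibnizBracketLeft E (X w) (X v) = E v w := by
  simp [leibnizBracketLeft, mkDerivationEquiv, mkDerivation_X]

theorem leibnizBracketLeft_mul (q q' : MvPolynomial σ R) :
    leibnizBracketLeft E (q * q') = q • leibnizBracketLeft E q' + q' • leibnizBracketLeft E q :=
  derivation_ext fun i => by simp [leibnizBracketLeft, mkDerivationEquiv, mkDerivation_X]

noncomputable def leibnizBracketRight (p : MvPolynomial σ R) :
    Derivation R (MvPolynomial σ R) (MvPolynomial σ R) :=
  Derivation.mk'
    { toFun := fun q => leibnizBracketLeft E q p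
      map_add' := fun q q' => by simp
      map_smul' := fun k q => by simp }
    fun q q' => by simp [leibnizBracketLeft_mul]

noncomputable def leibnizBracket (p q : MvPolynomial σ R) : MvPolynomial σ R :=
  leibnizBracketLeft E q p

theorem leibnizBracketRight_apply (p q : MvPolynomial σ R) :
    leibnizBracketRight E p q = leibnizBracket E p q := rfl

theorem leibnizBracket_X_X (v w : σ) : leibnizBracket E (X v) (X w) = E v w :=
  leibnizBracketLeft_X_X E v w

@[simp]
theorem leibnizBracket_zero_left (q : MvPolynomial σ R) : leibnizBracket E 0 q = 0 :=
  map_zero (leibnizBracketLeft E q)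

@[simp]
theorem leibnizBracket_zero_right (p : MvPolynomial σ R) : leibnizBracket E p 0 = 0 :=
  map_zero (leibnizBracketRight E p)

theorem leibnizBracket_add_left (p p' q : MvPolynomial σ R) :
    leibnizBracket E (p + p') q = leibnizBracket E p q + leibnizBracket E p' q :=
  map_add (leibnizBracketLeft E q) p p'

theorem leibnizBracket_add_right (p q q' : MvPolynomial σ R) :
    leibnizBracket E p (q + q') = leibnizBracket E p q + leibnizBracket E p q' :=
  map_add (leibnizBracketRight E p) q q'

theorem leibnizBracket_smul_left (k : R) (p q : MvPolynomial σ R) :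
    leibnizBracket E (k • p) q = k • leibnizBracket E p q :=
  (leibnizBracketLeft E q).map_smul k p

theorem leibnizBracket_smul_right (k : R) (p q : MvPolynomial σ R) :
    leibnizBracket E p (k • q) = k • leibnizBracket E p q :=
  (leibnizBracketRight E p).map_smul k q

theorem leibnizBracket_mul_left (p p' q : MvPolynomial σ R) :
    leibnizBracket E (p * p') q = p * leibnizBracket E p' q + leibnizBracket E p q * p' := by
  simp [leibnizBracket, mul_comm]

theorem leibnizBracket_mul_right (p q q' : MvPolynomial σ R) :
    leibnizBracket E p (q * q') = q * leibnizBracket E p q' + leibnizBracket E p q * q' := by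
  simp [← leibnizBracketRight_apply, mul_comm]

/-- Both sides are derivations in each argument, so it suffices to compare them on generators. -/
theorem leibnizBracket_antisymm (hE : ∀ v w, E v w = -E w v) (p q : MvPolynomial σ R) :
    leibnizBracket E p q = -leibnizBracket E q p := by
  have hX (v : σ) : leibnizBracketRight E (X v) = -leibnizBracketLeft E (X v) :=
    derivation_ext fun w => by
      simp [leibnizBracketRight_apply, leibnizBracket_X_X, leibnizBracketLeft_X_X, hE v w]
  have hq : leibnizBracketLeft E q = -leibnizBracketRight E q :=
    derivation_ext fun v => by
      have h := DFunLike.congr_fun (hX v) q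
      rw [Derivation.neg_apply] at h ⊢
      exact h
  exact DFunLike.congr_fun hq p

end MvPolynomial

variable {K : Type} [Field K] {ι : Type} (pos : ι → ℝ)

noncomputable def swappingBracketOnGens (v w : {p : ι × ι // p.1 ≠ p.2}) : SwapRing K ι :=
  Jlink (pos v.1.1) (pos v.1.2) (pos w.1.1) (pos w.1.2) • (gen v.1.1 w.1.2 * gen w.1.1 v.1.2)

noncomputable def swappingBracket : SwapRing K ι → SwapRing K ι → SwapRing K ι :=
  MvPolynomial.leibnizBracket (swappingBracketOnGens pos)

lemma swappingBracketOnGens_antisymm [CharZero K] (hpos : Function.Injective pos)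
    (v w : {p : ι × ι // p.1 ≠ p.2}) :
    swappingBracketOnGens (K := K) pos v w = -swappingBracketOnGens pos w v := by
  classical
  by_cases h₁ : v.1.1 = w.1.2
  · simp [swappingBracketOnGens, gen, h₁]
  by_cases h₂ : w.1.1 = v.1.2
  · simp [swappingBracketOnGens, gen, h₂]
  rw [swappingBracketOnGens, swappingBracketOnGens, mul_comm, Jlink_antisymm (hpos.ne v.2)
    (hpos.ne w.2) (hpos.ne h₁) (hpos.ne h₂), neg_smul]

lemma swappingBracket_gen [CharZero K] (r x s y : ι) :
    swappingBracket (K := K) pos (gen r x) (gen s y)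
      = Jlink (pos r) (pos x) (pos s) (pos y) • (gen r y * gen s x) := by
  classical
  by_cases hrx : r = x
  · simp [swappingBracket, gen, hrx, Jlink_self_left]
  by_cases hsy : s = y
  · simp [swappingBracket, gen, hsy, Jlink_self_right]
  rw [swappingBracket, gen, dif_neg hrx, gen, dif_neg hsy, MvPolynomial.leibnizBracket_X_X]
  rfl

theorem swapping_bracket_exists_antisymm_general (K : Type) [Field K] [CharZero K]
    (ι : Type) (pos : ι → ℝ) (hpos : Function.Injective pos) :
    ∃ B : SwapRing K ι → SwapRing K ι → SwapRing K ι,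
      (∀ x y z, B (x + y) z = B x z + B y z) ∧
      (∀ x y z, B x (y + z) = B x y + B x z) ∧
      (∀ (k : K) x z, B (k • x) z = k • B x z) ∧
      (∀ (k : K) x z, B x (k • z) = k • B x z) ∧
      (∀ x y z, B (x * y) z = x * B y z + B x z * y) ∧
      (∀ x y z, B x (y * z) = y * B x z + B x y * z) ∧
      (∀ r x s y : ι, B (gen r x) (gen s y)
          = Jlink (pos r) (pos x) (pos s) (pos y) • (gen r y * gen s x)) ∧
      (∀ A C, B A C = - B C A) :=
  open MvPolynomial in
  ⟨swappingBracket pos, leibnizBracket_add_left _, leibnizBracket_add_right _,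
    leibnizBracket_smul_left _, leibnizBracket_smul_right _, leibnizBracket_mul_left _,
    leibnizBracket_mul_right _, swappingBracket_gen pos,
    leibnizBracket_antisymm _ (swappingBracketOnGens_antisymm pos hpos)⟩

/-- On Z(P), the swapping bracket, defined on generators by {rx, sy} = J(rx,sy)·ry·sx
and extended by the Leibniz rule, is a well-defined biderivation that is antisymmetric. -/
theorem swapping_bracket_exists_antisymm (K : Type) [Field K] [CharZero K]
    (ι : Type) [Fintype ι] (pos : ι → ℝ) (hpos : Function.Injective pos) :
    ∃ B : SwapRing K ι → SwapRing K ι → SwapRing K ι,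
      (∀ x y z, B (x + y) z = B x z + B y z) ∧
      (∀ x y z, B x (y + z) = B x y + B x z) ∧
      (∀ (k : K) x z, B (k • x) z = k • B x z) ∧
      (∀ (k : K) x z, B x (k • z) = k • B x z) ∧
      (∀ x y z, B (x * y) z = x * B y z + B x z * y) ∧
      (∀ x y z, B x (y * z) = y * B x z + B x y * z) ∧
      (∀ r x s y : ι, B (gen r x) (gen s y)
          = Jlink (pos r) (pos x) (pos s) (pos y) • (gen r y * gen s x)) ∧
      (∀ A C, B A C = - B C A) :=
  swapping_bracket_exists_antisymm_general K ι pos hpos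
end

section
/- For any generator ab of Z(P) and any cross fraction (xz/xt)·(yt/yz) in the fraction field Q(P), the (0,1)-swapping bracket vanishes: {ab, (xz·yt)/(xt·yz)}_{0,1} = 0. -/
/-- The fraction field Q(P) of the swapping ring Z(P). -/
abbrev SwapField (K : Type) [Field K] (ι : Type) : Type := FractionRing (SwapRing K ι)

/-- The image of the generator xy in Q(P). -/
noncomputable def genQ {K : Type} [Field K] {ι : Type} (x y : ι) : SwapField K ι :=
  algebraMap (SwapRing K ι) (SwapField K ι) (gen x y)

/-! The map `{ab, ·}` obeys the Leibniz rule, and every generator `sw` is an eigenvector of it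
with eigenvalue `J(ab, sw) · ab`. Eigenvalues add over products and change sign under inversion,
so the cross fraction is an eigenvector with eigenvalue
`(J(ab,xz) - J(ab,xt) + J(ab,yt) - J(ab,yz)) · ab`, which vanishes by the cocycle identity. -/

section Leibniz

variable {R F : Type*} [CommRing R] [Field F]

theorem leibniz_map_one {D : R → R} (hD : ∀ u v, D (u * v) = u * D v + D u * v) : D 1 = 0 := by
  simpa using hD 1 1

theorem leibniz_map_mul_of_eigen {D : R → R} (hD : ∀ u v, D (u * v) = u * D v + D u * v)
    {p q α β : R} (hp : D p = α * p) (hq : D q = β * q) : D (p * q) = (α + β) * (p * q) := by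
  rw [hD, hp, hq]
  ring

theorem leibniz_map_inv_of_eigen {D : F → F} (hD : ∀ u v, D (u * v) = u * D v + D u * v)
    {c β : F} (hc0 : c ≠ 0) (hc : D c = β * c) : D c⁻¹ = -β * c⁻¹ := by
  have h := hD c c⁻¹
  rw [mul_inv_cancel₀ hc0, leibniz_map_one hD, hc] at h
  apply mul_left_cancel₀ hc0
  linear_combination -h

theorem leibniz_map_div_of_eigen {D : F → F} (hD : ∀ u v, D (u * v) = u * D v + D u * v)
    {p c α β : F} (hc0 : c ≠ 0) (hp : D p = α * p) (hc : D c = β * c) :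
    D (p / c) = (α - β) * (p / c) := by
  rw [div_eq_mul_inv, leibniz_map_mul_of_eigen hD hp (leibniz_map_inv_of_eigen hD hc0 hc)]
  ring

end Leibniz

/-- `J(ab, sy)` is `f y - f s` for `f w = ½ σ(a - b) σ(a - w) σ(w - b)`, so this alternating sum
telescopes. -/
theorem Jlink_cocycle (a b x y z t : ℝ) :
    Jlink a b x z - Jlink a b x t + Jlink a b y t - Jlink a b y z = 0 := by
  unfold Jlink
  ring

theorem rat_smul_eq_ratCast_mul {K : Type} [Field K] [CharZero K] {ι : Type} (q : ℚ)
    (u : SwapField K ι) : q • u = (q : SwapField K ι) * u := by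
  rw [← smul_one_smul K q u, Algebra.smul_def, Rat.smul_one_eq_cast, map_ratCast]

theorem genQ_ne_zero {K : Type} [Field K] {ι : Type} {x y : ι} (hxy : x ≠ y) :
    genQ (K := K) x y ≠ 0 := by
  rw [genQ, gen, dif_neg hxy, map_ne_zero_iff _ (IsFractionRing.injective _ _)]
  exact MvPolynomial.X_ne_zero _

theorem swapping_bracket01_cross_fraction_general (K : Type) [Field K] [CharZero K]
    (ι : Type) (pos : ι → ℝ)
    (B : SwapField K ι → SwapField K ι → SwapField K ι)
    (hlr : ∀ x y z, B x (y * z) = y * B x z + B x y * z)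
    (hgen : ∀ r x s y : ι, B (genQ r x) (genQ s y)
        = Jlink (pos r) (pos x) (pos s) (pos y) • (genQ r x * genQ s y))
    (a b x y z t : ι) (hxt : x ≠ t) (hyz : y ≠ z) :
    B (genQ a b) ((genQ x z * genQ y t) / (genQ x t * genQ y z)) = 0 := by
  set J : ι → ι → SwapField K ι := fun s w => (Jlink (pos a) (pos b) (pos s) (pos w) : ℚ)
  have heigen : ∀ s w, B (genQ a b) (genQ s w) = (J s w * genQ a b) * genQ s w := fun s w => by
    rw [hgen, rat_smul_eq_ratCast_mul, mul_assoc]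
  rw [leibniz_map_div_of_eigen (hlr _) (mul_ne_zero (genQ_ne_zero hxt) (genQ_ne_zero hyz))
    (leibniz_map_mul_of_eigen (hlr _) (heigen x z) (heigen y t))
    (leibniz_map_mul_of_eigen (hlr _) (heigen x t) (heigen y z))]
  have hJ : J x z - J x t + J y t - J y z = 0 := by
    simp only [J]
    exact_mod_cast congrArg (Rat.cast : ℚ → SwapField K ι)
      (Jlink_cocycle (pos a) (pos b) (pos x) (pos y) (pos z) (pos t))
  linear_combination (genQ a b * (genQ x z * genQ y t / (genQ x t * genQ y z))) * hJ

/-- For any generator ab and any cross fraction (xz/xt)·(yt/yz) ∈ Q(P), the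
(0,1)-swapping bracket vanishes: {ab, (xz·yt)/(xt·yz)}_{0,1} = 0. -/
theorem swapping_bracket01_cross_fraction (K : Type) [Field K] [CharZero K]
    (ι : Type) [Fintype ι] (pos : ι → ℝ) (hpos : Function.Injective pos)
    (B : SwapField K ι → SwapField K ι → SwapField K ι)
    (hal : ∀ x y z, B (x + y) z = B x z + B y z)
    (har : ∀ x y z, B x (y + z) = B x y + B x z)
    (hll : ∀ x y z, B (x * y) z = x * B y z + B x z * y)
    (hlr : ∀ x y z, B x (y * z) = y * B x z + B x y * z)
    (hgen : ∀ r x s y : ι, B (genQ r x) (genQ s y)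
        = Jlink (pos r) (pos x) (pos s) (pos y) • (genQ r x * genQ s y))
    (a b x y z t : ι) (hxt : x ≠ t) (hyz : y ≠ z) :
    B (genQ a b) ((genQ x z * genQ y t) / (genQ x t * genQ y z)) = 0 :=
  swapping_bracket01_cross_fraction_general K ι pos B hlr hgen a b x y z t hxt hyz
end

section
/- Any two elements of the subring B(P) of Q(P) generated by cross fractions have vanishing (0,1)-swapping bracket: {μ, ν}_{0,1} = 0 for all μ, ν ∈ B(P). -/
/-- The subring B(P) of Q(P) generated by all cross fractions (xz/xt)·(yt/yz). -/
noncomputable def crossSubring (K : Type) [Field K] [CharZero K] (ι : Type) :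
    Subring (SwapField K ι) :=
  Subring.closure {q | ∃ x y z t : ι, x ≠ t ∧ y ≠ z ∧
    q = (genQ x z * genQ y t) / (genQ x t * genQ y z)}

/-!
Fixing one argument of the bracket gives a derivation of Q(P), and the elements a derivation
kills form a subring, so it suffices that each such derivation kills every cross fraction.
With the left argument fixed at a generator rx, every generator sy is an eigenvector, with
eigenvalue J(rx, sy)·rx. Eigenvalues add under products and subtract under quotients, so the
cross fraction (xz·yt)/(xt·yz) has eigenvalue (J(xz) + J(yt) - J(xt) - J(yz))·rx, and this
vanishes because J(rx, sy) is a function of y minus a function of s. Hence {rx, ν} = 0 for all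
ν ∈ B(P); then, with the right argument fixed at ν ∈ B(P), the derivation kills every generator
and therefore again all of B(P).
-/

namespace Derivation

section Ker

variable {R A M : Type*} [CommRing R] [CommRing A] [AddCommGroup M] [Algebra R A] [Module A M]
  [Module R M]

def kerSubring (D : Derivation R A M) : Subring A where
  carrier := {a | D a = 0}
  zero_mem' := D.map_zero
  one_mem' := D.map_one_eq_zero
  add_mem' {a b} ha hb := by simp_all
  neg_mem' {a} ha := by simp_all
  mul_mem' {a b} ha hb := by simp_all

@[simp]
theorem mem_kerSubring {D : Derivation R A M} {a : A} : a ∈ D.kerSubring ↔ D a = 0 :=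
  Iff.rfl

end Ker

section Eigen

variable {R K : Type*} [CommRing R] [Field K] [Algebra R K] (D : Derivation R K K) {a b α β : K}

theorem map_mul_of_eq_mul (ha : D a = α * a) (hb : D b = β * b) :
    D (a * b) = (α + β) * (a * b) := by
  rw [leibniz, ha, hb, smul_eq_mul, smul_eq_mul]
  ring

theorem map_div_of_eq_mul (ha : D a = α * a) (hb : D b = β * b) :
    D (a / b) = (α - β) * (a / b) := by
  rcases eq_or_ne b 0 with rfl | hb0
  · simp
  rw [leibniz_div, ha, hb, smul_eq_mul, smul_eq_mul, smul_eq_mul]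
  field_simp

end Eigen

theorem closure_crossFractions_le_kerSubring {F ι : Type*} [Field F] (D : Derivation ℤ F F)
    (w α : ι → ι → F) (hD : ∀ x y, D (w x y) = α x y * w x y)
    (hα : ∀ x y z t, α x z + α y t = α x t + α y z) :
    Subring.closure {q | ∃ x y z t : ι, x ≠ t ∧ y ≠ z ∧ q = (w x z * w y t) / (w x t * w y z)} ≤
      D.kerSubring := by
  refine Subring.closure_le.mpr ?_
  rintro _ ⟨x, y, z, t, -, -, rfl⟩
  rw [SetLike.mem_coe, mem_kerSubring,
    D.map_div_of_eq_mul (D.map_mul_of_eq_mul (hD x z) (hD y t))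
      (D.map_mul_of_eq_mul (hD x t) (hD y z)), hα, sub_self, zero_mul]

end Derivation

section BracketDerivations

variable {A : Type*} [CommRing A] {B : A → A → A}

def bracketDerivationLeft (hal : ∀ x y z, B (x + y) z = B x z + B y z)
    (hll : ∀ x y z, B (x * y) z = x * B y z + B x z * y) (z : A) : Derivation ℤ A A :=
  Derivation.mk' (AddMonoidHom.mk' (B · z) (hal · · z)).toIntLinearMap
    fun x y => by simp [hll, mul_comm]

@[simp]
theorem bracketDerivationLeft_apply (hal : ∀ x y z, B (x + y) z = B x z + B y z)
    (hll : ∀ x y z, B (x * y) z = x * B y z + B x z * y) (z x : A) :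
    bracketDerivationLeft hal hll z x = B x z :=
  rfl

def bracketDerivationRight (har : ∀ x y z, B x (y + z) = B x y + B x z)
    (hlr : ∀ x y z, B x (y * z) = y * B x z + B x y * z) (x : A) : Derivation ℤ A A :=
  Derivation.mk' (AddMonoidHom.mk' (B x) (har x)).toIntLinearMap
    fun y z => by simp [hlr, mul_comm]

@[simp]
theorem bracketDerivationRight_apply (har : ∀ x y z, B x (y + z) = B x y + B x z)
    (hlr : ∀ x y z, B x (y * z) = y * B x z + B x y * z) (x y : A) :
    bracketDerivationRight har hlr x y = B x y :=
  rfl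

end BracketDerivations

-- The `ℚ`-action on `FractionRing A` is induced from the one on `A`, so `Rat.smul_def` does not
-- apply to it directly.
theorem FractionRing.rat_smul_eq_cast_mul {A : Type*} [CommRing A] [IsDomain A] [Algebra ℚ A]
    (q : ℚ) (x : FractionRing A) : q • x = q * x := by
  rw [← algebraMap_smul A q x, ← algebraMap_smul (FractionRing A), smul_eq_mul,
    ← IsScalarTower.algebraMap_apply, eq_ratCast]

theorem Jlink_add_eq_add (r x a b c d : ℝ) :
    Jlink r x a c + Jlink r x b d = Jlink r x a d + Jlink r x b c := by
  unfold Jlink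
  ring

theorem swapping_bracket01_vanishes_on_crossSubring_general (K : Type) [Field K] [CharZero K]
    (ι : Type) (pos : ι → ℝ)
    (B : SwapField K ι → SwapField K ι → SwapField K ι)
    (hal : ∀ x y z, B (x + y) z = B x z + B y z)
    (har : ∀ x y z, B x (y + z) = B x y + B x z)
    (hll : ∀ x y z, B (x * y) z = x * B y z + B x z * y)
    (hlr : ∀ x y z, B x (y * z) = y * B x z + B x y * z)
    (hgen : ∀ r x s y : ι, B (genQ r x) (genQ s y)
        = Jlink (pos r) (pos x) (pos s) (pos y) • (genQ r x * genQ s y)) :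
    ∀ μ ∈ crossSubring K ι, ∀ ν ∈ crossSubring K ι, B μ ν = 0 := by
  have bracket_genQ_left (r x : ι) : ∀ ν ∈ crossSubring K ι, B (genQ r x) ν = 0 := fun _ hν =>
    (bracketDerivationRight har hlr (genQ r x)).closure_crossFractions_le_kerSubring genQ
      (fun s y => (Jlink (pos r) (pos x) (pos s) (pos y) : SwapField K ι) * genQ r x)
      (fun s y => by simp [hgen, FractionRing.rat_smul_eq_cast_mul, mul_assoc])
      (fun s y z t => by
        rw [← add_mul, ← add_mul, ← Rat.cast_add, ← Rat.cast_add, Jlink_add_eq_add]) hν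
  intro μ hμ ν hν
  simpa using (bracketDerivationLeft hal hll ν).closure_crossFractions_le_kerSubring genQ 0
    (fun r x => by simp [bracket_genQ_left r x ν hν]) (by simp) hμ

/-- Any two elements of the subring B(P) generated by cross fractions have vanishing
(0,1)-swapping bracket. -/
theorem swapping_bracket01_vanishes_on_crossSubring (K : Type) [Field K] [CharZero K]
    (ι : Type) [Fintype ι] (pos : ι → ℝ) (hpos : Function.Injective pos)
    (B : SwapField K ι → SwapField K ι → SwapField K ι)
    (hal : ∀ x y z, B (x + y) z = B x z + B y z)
    (har : ∀ x y z, B x (y + z) = B x y + B x z)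
    (hll : ∀ x y z, B (x * y) z = x * B y z + B x z * y)
    (hlr : ∀ x y z, B x (y * z) = y * B x z + B x y * z)
    (hgen : ∀ r x s y : ι, B (genQ r x) (genQ s y)
        = Jlink (pos r) (pos x) (pos s) (pos y) • (genQ r x * genQ s y)) :
    ∀ μ ∈ crossSubring K ι, ∀ ν ∈ crossSubring K ι, B μ ν = 0 :=
  swapping_bracket01_vanishes_on_crossSubring_general K ι pos B hal har hll hlr hgen
end

section
/- Let a, b and x₁,…,x_m, y₁,…,y_m be points of P and let Δ = det(x_i y_j)_{i,j=1}^m ∈ Z(P). Then under the (0,1)-swapping bracket, {ab, Δ}_{0,1} = K · ab · Δ, where K = Σ_{i=1}^m J(ab, x_i y_{σ(i)}) for any (equivalently, every) permutation σ ∈ S_m; in particular this sum is independent of σ. -/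
/-!
The Leibniz rule in the second slot makes `B (ab)` a derivation of `Z(P)`, and the linking number
with the fixed chord `ab` is a coboundary: `J(ab, cd) = φ(d) - φ(c)`. Hence the derivation sends
each monomial `∏ᵢ xᵢ y_{σ i}` of `Δ` to `c · ab` times itself with `c = ∑ⱼ φ(yⱼ) - ∑ᵢ φ(xᵢ)`, the
same for every `σ`, and therefore sends `Δ` to `c · ab · Δ`.
-/

namespace Derivation

variable {S R : Type*} [CommSemiring S] [CommRing R] [Algebra S R]

def ofLeibniz (f : R → R) (map_add : ∀ x y, f (x + y) = f x + f y)
    (leibniz : ∀ x y, f (x * y) = x * f y + f x * y) : Derivation ℤ R R :=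
  mk' (AddMonoidHom.mk' f map_add).toIntLinearMap fun x y => by
    simp [leibniz, mul_comm]

theorem apply_prod_of_apply_eq_mul (D : Derivation S R R) {ι : Type*} (s : Finset ι)
    (p h : ι → R) (hp : ∀ i ∈ s, D (p i) = h i * p i) :
    D (∏ i ∈ s, p i) = (∑ i ∈ s, h i) * ∏ i ∈ s, p i := by
  classical
  induction s using Finset.induction_on with
  | empty => simp
  | insert j s hj ih =>
    rw [Finset.prod_insert hj, Finset.sum_insert hj, leibniz, smul_eq_mul, smul_eq_mul,
      ih fun i hi => hp i (Finset.mem_insert_of_mem hi), hp j (Finset.mem_insert_self j s)]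
    ring

theorem apply_det_of_apply_prod_eq_mul (D : Derivation S R R) {n : Type*} [Fintype n]
    [DecidableEq n] (M : Matrix n n R) (h : R)
    (hM : ∀ σ : Equiv.Perm n, D (∏ i, M i (σ i)) = h * ∏ i, M i (σ i)) :
    D M.det = h * M.det := by
  rw [← Matrix.det_transpose, Matrix.det_apply, map_sum, Finset.mul_sum]
  refine Finset.sum_congr rfl fun σ _ => ?_
  rw [Units.smul_def, map_zsmul, mul_smul_comm]
  exact congrArg _ (hM σ)

end Derivation

noncomputable def linkPotential (r s t : ℝ) : ℚ :=
  (1/2) * sgnq (r - s) * sgnq (r - t) * sgnq (t - s)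

theorem Jlink_eq_linkPotential_sub (r s u v : ℝ) :
    Jlink r s u v = linkPotential r s v - linkPotential r s u := rfl

theorem sum_Jlink_perm {ι : Type*} [Fintype ι] (r s : ℝ) (u v : ι → ℝ) (σ : Equiv.Perm ι) :
    ∑ i, Jlink r s (u i) (v (σ i)) = ∑ i, linkPotential r s (v i) - ∑ i, linkPotential r s (u i) := by
  simp only [Jlink_eq_linkPotential_sub, Finset.sum_sub_distrib,
    Equiv.sum_comp σ fun i => linkPotential r s (v i)]

theorem swapping_bracket01_det_general (K : Type) [Field K] [CharZero K]
    (ι : Type) (pos : ι → ℝ)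
    (B : SwapRing K ι → SwapRing K ι → SwapRing K ι)
    (har : ∀ x y z, B x (y + z) = B x y + B x z)
    (hlr : ∀ x y z, B x (y * z) = y * B x z + B x y * z)
    (hgen : ∀ r x s y : ι, B (gen r x) (gen s y)
        = Jlink (pos r) (pos x) (pos s) (pos y) • (gen r x * gen s y))
    (m : ℕ) (a b : ι) (x y : Fin m → ι) :
    (∀ σ : Equiv.Perm (Fin m),
      B (gen a b) (Matrix.det (Matrix.of fun i j => gen (x i) (y j)))
        = (∑ i, Jlink (pos a) (pos b) (pos (x i)) (pos (y (σ i))))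
            • (gen a b * Matrix.det (Matrix.of fun i j => gen (x i) (y j)))) ∧
    (∀ σ σ' : Equiv.Perm (Fin m),
      (∑ i, Jlink (pos a) (pos b) (pos (x i)) (pos (y (σ i))))
        = ∑ i, Jlink (pos a) (pos b) (pos (x i)) (pos (y (σ' i)))) := by
  have hsum := sum_Jlink_perm (pos a) (pos b) (fun i => pos (x i)) (fun i => pos (y i))
  beta_reduce at hsum
  refine ⟨fun σ => ?_, fun σ σ' => (hsum σ).trans (hsum σ').symm⟩
  let D := Derivation.ofLeibniz (B (gen a b)) (har _) (hlr _)
  rw [hsum σ, ← smul_mul_assoc]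
  refine D.apply_det_of_apply_prod_eq_mul _ _ fun τ => ?_
  simp only [Matrix.of_apply]
  rw [D.apply_prod_of_apply_eq_mul _ _
      (fun i => Jlink (pos a) (pos b) (pos (x i)) (pos (y (τ i))) • gen a b)
      fun i _ => (hgen a b _ _).trans (smul_mul_assoc _ _ _).symm,
    ← Finset.sum_smul, hsum τ]

/-- For Δ = det(xᵢyⱼ) ∈ Z(P), under the (0,1)-swapping bracket,
{ab, Δ}_{0,1} = K · ab · Δ where K = Σᵢ J(ab, xᵢ y_{σ(i)}) for any (equivalently every)
permutation σ; in particular this sum is independent of σ. -/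
theorem swapping_bracket01_det (K : Type) [Field K] [CharZero K]
    (ι : Type) [Fintype ι] (pos : ι → ℝ) (hpos : Function.Injective pos)
    (B : SwapRing K ι → SwapRing K ι → SwapRing K ι)
    (hal : ∀ x y z, B (x + y) z = B x z + B y z)
    (har : ∀ x y z, B x (y + z) = B x y + B x z)
    (hsl : ∀ (k : K) x z, B (k • x) z = k • B x z)
    (hsr : ∀ (k : K) x z, B x (k • z) = k • B x z)
    (hll : ∀ x y z, B (x * y) z = x * B y z + B x z * y)
    (hlr : ∀ x y z, B x (y * z) = y * B x z + B x y * z)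
    (hgen : ∀ r x s y : ι, B (gen r x) (gen s y)
        = Jlink (pos r) (pos x) (pos s) (pos y) • (gen r x * gen s y))
    (m : ℕ) (a b : ι) (x y : Fin m → ι) :
    (∀ σ : Equiv.Perm (Fin m),
      B (gen a b) (Matrix.det (Matrix.of fun i j => gen (x i) (y j)))
        = (∑ i, Jlink (pos a) (pos b) (pos (x i)) (pos (y (σ i))))
            • (gen a b * Matrix.det (Matrix.of fun i j => gen (x i) (y j)))) ∧
    (∀ σ σ' : Equiv.Perm (Fin m),
      (∑ i, Jlink (pos a) (pos b) (pos (x i)) (pos (y (σ i))))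
        = ∑ i, Jlink (pos a) (pos b) (pos (x i)) (pos (y (σ' i)))) :=
  swapping_bracket01_det_general K ι pos B har hlr hgen m a b x y
end

section
/- For any permutation σ in S_m and any transposition (k l), the sums K(σ) = Σ_{i=1}^m J(ab, x_i y_{σ(i)}) satisfy K((k l)∘σ) = K(σ); hence K(σ) is constant on S_m. -/
/-!
For a fixed pair `ab`, the linking number is a coboundary in its second pair:
`J(ab, s y) = φ y - φ s` with `φ t = ½ sgn(a-b) sgn(a-t) sgn(t-b)`. Hence
`K(σ) = ∑ⱼ φ (y j) - ∑ᵢ φ (x i)`, and a permutation only reorders the first sum.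
-/

noncomputable def sgn (a : ℝ) : ℝ := if a < 0 then -1 else if a = 0 then 0 else 1

/-- The linking number J(rx, sy) of two ordered pairs of points on the circle minus a
point, identified with real numbers. -/
noncomputable def linking (r x s y : ℝ) : ℝ :=
  (1/2) * sgn (r-x) * sgn (r-y) * sgn (y-x) - (1/2) * sgn (r-x) * sgn (r-s) * sgn (s-x)

theorem sum_comp_perm_sub {ι M : Type*} [Fintype ι] [AddCommGroup M] (f g : ι → M)
    (σ : Equiv.Perm ι) : ∑ i, (f (σ i) - g i) = ∑ i, (f i - g i) := by
  rw [Finset.sum_sub_distrib, Finset.sum_sub_distrib, Equiv.sum_comp σ f]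

noncomputable def linkingPotential (r x t : ℝ) : ℝ :=
  (1/2) * sgn (r-x) * sgn (r-t) * sgn (t-x)

theorem linking_eq_linkingPotential_sub (r x s y : ℝ) :
    linking r x s y = linkingPotential r x y - linkingPotential r x s :=
  rfl

theorem sum_linking_comp_perm {ι : Type*} [Fintype ι] (a b : ℝ) (x y : ι → ℝ)
    (σ : Equiv.Perm ι) :
    ∑ i, linking a b (x i) (y (σ i)) = ∑ i, linking a b (x i) (y i) := by
  simp only [linking_eq_linkingPotential_sub]
  exact sum_comp_perm_sub (fun j => linkingPotential a b (y j)) _ σ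

/-- For any permutation σ and any transposition (k l), the sums
K(σ) = Σᵢ J(ab, xᵢ y_{σ(i)}) satisfy K((k l)∘σ) = K(σ); hence K(σ) is constant on S_m. -/
theorem linking_sum_perm_invariant (m : ℕ) (a b : ℝ) (x y : Fin m → ℝ) :
    (∀ (σ : Equiv.Perm (Fin m)) (k l : Fin m),
        (∑ i, linking a b (x i) (y ((Equiv.swap k l * σ) i)))
          = ∑ i, linking a b (x i) (y (σ i))) ∧
    (∀ σ σ' : Equiv.Perm (Fin m),
        (∑ i, linking a b (x i) (y (σ i))) = ∑ i, linking a b (x i) (y (σ' i))) := by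
  refine ⟨fun σ k l => ?_, fun σ σ' => ?_⟩
  · rw [sum_linking_comp_perm, sum_linking_comp_perm]
  · rw [sum_linking_comp_perm, sum_linking_comp_perm]
end

section
/- The ideal R_n(P) of Z(P) generated by all (n+1)×(n+1) determinants Δ((x₁,…,x_{n+1}),(y₁,…,y_{n+1})) = det(x_i y_j) is a Poisson ideal of Z(P) with respect to the (α,β)-swapping bracket: {Z(P), R_n(P)}_{α,β} ⊆ R_n(P). -/
/-- The ideal R_n(P) generated by all (n+1)×(n+1) determinants det(xᵢyⱼ). -/
noncomputable def rankIdeal (K : Type) [Field K] (ι : Type) (n : ℕ) : Ideal (SwapRing K ι) :=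
  Ideal.span {D | ∃ x y : Fin (n+1) → ι,
    D = Matrix.det (Matrix.of fun i j => gen (x i) (y j))}

/-! For fixed `f` and `g`, both `B f` and `B · g` are derivations, so it suffices to bracket a
generator `rx` with a minor `det (xᵢyⱼ)`. Expand by Jacobi's formula and write
`J(rx, sy) = w(y) - w(s)`: the `β`-terms add up to a multiple of the minor itself, and through the
adjugate the `α`-terms regroup into the minors obtained by replacing one column index `yⱼ` by `x`
or one row index `xᵢ` by `r`. -/

open Finset Matrix

theorem Derivation.leibniz_finsetProd {R A M : Type*} [CommSemiring R] [CommRing A]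
    [Algebra R A] [AddCommGroup M] [Module A M] [Module R M] (D : Derivation R A M)
    {κ : Type*} [DecidableEq κ] (s : Finset κ) (f : κ → A) :
    D (∏ i ∈ s, f i) = ∑ i ∈ s, (∏ k ∈ s.erase i, f k) • D (f i) := by
  induction s using Finset.induction_on with
  | empty => simp
  | @insert a s ha ih =>
    rw [prod_insert ha, Derivation.leibniz, ih, sum_insert ha, erase_insert ha, smul_sum,
      add_comm]
    congr 1
    refine sum_congr rfl fun i hi => ?_
    rw [erase_insert_of_ne (ne_of_mem_of_not_mem hi ha).symm,
      prod_insert fun h => ha (mem_of_mem_erase h), mul_smul]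

theorem Derivation.apply_mem_span_of_forall {R A : Type*} [CommSemiring R] [CommRing A]
    [Algebra R A] (D : Derivation R A A) {S : Set A} (hS : ∀ s ∈ S, D s ∈ Ideal.span S)
    {a : A} (ha : a ∈ Ideal.span S) : D a ∈ Ideal.span S := by
  induction ha using Submodule.span_induction with
  | mem s hs => exact hS s hs
  | zero => simp
  | add a b _ _ ha hb => simpa using add_mem ha hb
  | smul c a haS ha =>
    rw [smul_eq_mul, Derivation.leibniz]
    exact add_mem (Ideal.mul_mem_left _ c ha) (Ideal.mul_mem_right _ _ haS)

theorem MvPolynomial.derivation_apply_mem_of_forall_X {R σ : Type*} [CommRing R]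
    (D : Derivation R (MvPolynomial σ R) (MvPolynomial σ R)) {I : Ideal (MvPolynomial σ R)}
    (hX : ∀ v, D (X v) ∈ I) (f : MvPolynomial σ R) : D f ∈ I := by
  induction f using MvPolynomial.induction_on with
  | C k => simpa only [← algebraMap_eq, D.map_algebraMap] using I.zero_mem
  | add p q hp hq => simpa using add_mem hp hq
  | mul_X p v hp =>
    rw [Derivation.leibniz]
    exact add_mem (Ideal.mul_mem_left _ _ (hX v)) (Ideal.mul_mem_left _ _ hp)

namespace Matrix

variable {A : Type*} [CommRing A] {m : Type*} [Fintype m] [DecidableEq m]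

theorem det_updateCol_eq_sum_adjugate_mul (N : Matrix m m A) (j : m) (c : m → A) :
    (N.updateCol j c).det = ∑ i, N.adjugate j i * c i := by
  rw [← cramer_apply, cramer_eq_adjugate_mulVec]
  rfl

theorem det_updateRow_eq_sum_adjugate_mul (N : Matrix m m A) (i : m) (c : m → A) :
    (N.updateRow i c).det = ∑ j, N.adjugate j i * c j := by
  rw [← det_transpose, ← updateCol_transpose, det_updateCol_eq_sum_adjugate_mul,
    ← adjugate_transpose]
  rfl

/-- Jacobi's formula. -/
theorem derivation_det {R : Type*} [CommSemiring R] [Algebra R A] (D : Derivation R A A)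
    (N : Matrix m m A) : D N.det = ∑ i, ∑ j, N.adjugate j i * D (N i j) := by
  have hcol : ∀ j, (N.updateCol j fun i => D (N i j)).det
      = ∑ σ : Equiv.Perm m, Equiv.Perm.sign σ •
          ((∏ k ∈ univ.erase j, N (σ k) k) * D (N (σ j) j)) := by
    intro j
    rw [det_apply]
    refine sum_congr rfl fun σ _ => ?_
    rw [← mul_prod_erase _ _ (mem_univ j), mul_comm]
    simp only [updateCol_self]
    congr 2
    exact prod_congr rfl fun k hk => updateCol_ne (ne_of_mem_erase hk)
  rw [sum_comm]
  simp_rw [← det_updateCol_eq_sum_adjugate_mul, hcol, sum_comm (γ := m)]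
  rw [det_apply, map_sum]
  refine sum_congr rfl fun σ _ => ?_
  rw [Units.smul_def, map_zsmul, Derivation.leibniz_finsetProd, smul_sum]
  simp only [smul_eq_mul, Units.smul_def]

theorem sum_adjugate_mul_sub_mul_self (N : Matrix m m A) (u v : m → A) :
    ∑ i, ∑ j, N.adjugate j i * ((u j - v i) * N i j) = (∑ j, u j - ∑ i, v i) * N.det := by
  have hcol : ∀ j, ∑ i, N.adjugate j i * N i j = N.det := fun j => by
    rw [← det_updateCol_eq_sum_adjugate_mul, updateCol_eq_self]
  have hrow : ∀ i, ∑ j, N.adjugate j i * N i j = N.det := fun i => by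
    rw [← det_updateRow_eq_sum_adjugate_mul, updateRow_eq_self]
  calc ∑ i, ∑ j, N.adjugate j i * ((u j - v i) * N i j)
      = ∑ j, u j * ∑ i, N.adjugate j i * N i j
          - ∑ i, v i * ∑ j, N.adjugate j i * N i j := by
        simp only [mul_sum]
        rw [sum_comm (f := fun j i => u j * (N.adjugate j i * N i j)), ← sum_sub_distrib]
        refine sum_congr rfl fun i _ => ?_
        rw [← sum_sub_distrib]
        exact sum_congr rfl fun j _ => by ring
    _ = (∑ j, u j - ∑ i, v i) * N.det := by simp only [hcol, hrow, ← sum_mul, sub_mul]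

theorem sum_adjugate_mul_sub_mul_mul (N : Matrix m m A) (u v p q : m → A) :
    ∑ i, ∑ j, N.adjugate j i * ((u j - v i) * (p j * q i))
      = ∑ j, u j * p j * (N.updateCol j q).det - ∑ i, v i * q i * (N.updateRow i p).det := by
  simp only [det_updateCol_eq_sum_adjugate_mul, det_updateRow_eq_sum_adjugate_mul, mul_sum]
  rw [sum_comm (f := fun j i => u j * p j * (N.adjugate j i * q i)), ← sum_sub_distrib]
  refine sum_congr rfl fun i _ => ?_
  rw [← sum_sub_distrib]
  exact sum_congr rfl fun j _ => by ring

theorem updateCol_of_apply_eq {α ι : Type*} (g : ι → ι → α) {m : ℕ} (x y : Fin m → ι)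
    (j : Fin m) (t : ι) :
    (of fun i j => g (x i) (y j)).updateCol j (fun i => g (x i) t)
      = of fun i j' => g (x i) (Function.update y j t j') := by
  ext i j'
  rw [updateCol_apply, of_apply, of_apply, Function.update_apply]
  split_ifs <;> rfl

theorem updateRow_of_apply_eq {α ι : Type*} (g : ι → ι → α) {m : ℕ} (x y : Fin m → ι)
    (i : Fin m) (s : ι) :
    (of fun i j => g (x i) (y j)).updateRow i (fun j => g s (y j))
      = of fun i' j => g (Function.update x i s i') (y j) := by
  ext i' j
  rw [updateRow_apply, of_apply, of_apply, Function.update_apply]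
  split_ifs <;> rfl

end Matrix

section detIdeal

variable {A ι : Type*} [CommRing A]

def detIdeal (g : ι → ι → A) (m : ℕ) : Ideal A :=
  Ideal.span {D | ∃ x y : Fin m → ι, D = (of fun i j => g (x i) (y j)).det}

theorem derivation_det_mem_detIdeal {R : Type*} [CommSemiring R] [Algebra R A]
    (D : Derivation R A A) (g : ι → ι → A) (r x₀ : ι) (w : ι → A) (a b : A)
    (hD : ∀ s t, D (g s t) = (w t - w s) * (a * (g r t * g s x₀) + b * g s t))
    {m : ℕ} (x y : Fin m → ι) : D (of fun i j => g (x i) (y j)).det ∈ detIdeal g m := by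
  set N : Matrix (Fin m) (Fin m) A := of fun i j => g (x i) (y j)
  have hmem : ∀ x' y' : Fin m → ι, (of fun i j => g (x' i) (y' j)).det ∈ detIdeal g m :=
    fun x' y' => Ideal.subset_span ⟨x', y', rfl⟩
  have expand : D N.det
      = a * (∑ j, w (y j) * g r (y j) * (N.updateCol j fun i => g (x i) x₀).det
          - ∑ i, w (x i) * g (x i) x₀ * (N.updateRow i fun j => g r (y j)).det)
        + b * ((∑ j, w (y j) - ∑ i, w (x i)) * N.det) := by
    rw [derivation_det, ← sum_adjugate_mul_sub_mul_mul, ← sum_adjugate_mul_sub_mul_self,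
      mul_sum, mul_sum, ← sum_add_distrib]
    refine sum_congr rfl fun i _ => ?_
    rw [mul_sum, mul_sum, ← sum_add_distrib]
    refine sum_congr rfl fun j _ => ?_
    simp only [N, of_apply, hD]
    ring
  have hcol (j) : (N.updateCol j fun i => g (x i) x₀).det ∈ detIdeal g m :=
    updateCol_of_apply_eq g x y j x₀ ▸ hmem _ _
  have hrow (i) : (N.updateRow i fun j => g r (y j)).det ∈ detIdeal g m :=
    updateRow_of_apply_eq g x y i r ▸ hmem _ _
  rw [expand]
  refine add_mem (Ideal.mul_mem_left _ _ (sub_mem ?_ ?_)) ?_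
  · exact sum_mem fun j _ => Ideal.mul_mem_left _ _ (hcol j)
  · exact sum_mem fun i _ => Ideal.mul_mem_left _ _ (hrow i)
  · exact Ideal.mul_mem_left _ _ (Ideal.mul_mem_left _ _ (hmem x y))

end detIdeal

noncomputable def linkWeight (r x t : ℝ) : ℚ :=
  (1/2) * sgnq (r-x) * sgnq (r-t) * sgnq (t-x)

/-- This splitting is what makes the bracket of a generator with a minor a combination of
minors. -/
theorem Jlink_eq_linkWeight_sub (r x s y : ℝ) :
    Jlink r x s y = linkWeight r x y - linkWeight r x s := rfl

theorem rankIdeal_poisson_general (K : Type) [Field K] [CharZero K] (α β : K) (n : ℕ)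
    (ι : Type) (pos : ι → ℝ)
    (B : SwapRing K ι → SwapRing K ι → SwapRing K ι)
    (hal : ∀ x y z, B (x + y) z = B x z + B y z)
    (har : ∀ x y z, B x (y + z) = B x y + B x z)
    (hsl : ∀ (k : K) x z, B (k • x) z = k • B x z)
    (hll : ∀ x y z, B (x * y) z = x * B y z + B x z * y)
    (hlr : ∀ x y z, B x (y * z) = y * B x z + B x y * z)
    (hgen : ∀ r x s y : ι, B (gen r x) (gen s y)
        = Jlink (pos r) (pos x) (pos s) (pos y)
            • (α • (gen r y * gen s x) + β • (gen r x * gen s y))) :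
    ∀ f g : SwapRing K ι, g ∈ rankIdeal K ι n → B f g ∈ rankIdeal K ι n := by
  intro f g hg
  let bracketRight (f) : Derivation ℤ (SwapRing K ι) (SwapRing K ι) :=
    Derivation.mk' (AddMonoidHom.mk' (B f) (har f)).toIntLinearMap fun a b => by
      simp [hlr, mul_comm]
  let bracketLeft (g) : Derivation K (SwapRing K ι) (SwapRing K ι) :=
    Derivation.mk' ⟨⟨fun f => B f g, fun x y => hal x y g⟩, fun k x => hsl k x g⟩
      fun a b => by simp [hll, mul_comm]
  have hbracket (r x₀ s t : ι) : B (gen r x₀) (gen s t)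
      = (algebraMap ℚ _ (linkWeight (pos r) (pos x₀) (pos t))
          - algebraMap ℚ _ (linkWeight (pos r) (pos x₀) (pos s)))
        * (algebraMap K _ α * (gen r t * gen s x₀)
          + algebraMap K _ β * gen r x₀ * gen s t) := by
    rw [hgen, Jlink_eq_linkWeight_sub, Algebra.smul_def, Algebra.smul_def, Algebra.smul_def,
      map_sub]
    ring
  refine MvPolynomial.derivation_apply_mem_of_forall_X (bracketLeft g)
    (fun ⟨(r, x₀), h⟩ => ?_) f
  have hX : MvPolynomial.X ⟨(r, x₀), h⟩ = (gen r x₀ : SwapRing K ι) := by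
    rw [gen, dif_neg h]
  refine (bracketRight _).apply_mem_span_of_forall ?_ hg
  rintro _ ⟨x, y, rfl⟩
  rw [hX]
  exact derivation_det_mem_detIdeal (bracketRight (gen r x₀)) gen r x₀ _ _ _
    (hbracket r x₀) x y

/-- R_n(P) is a Poisson ideal of Z(P) with respect to the (α,β)-swapping bracket:
{Z(P), R_n(P)}_{α,β} ⊆ R_n(P). -/
theorem rankIdeal_poisson (K : Type) [Field K] [CharZero K] (α β : K) (n : ℕ) (hn : 2 ≤ n)
    (ι : Type) [Fintype ι] (pos : ι → ℝ) (hpos : Function.Injective pos)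
    (B : SwapRing K ι → SwapRing K ι → SwapRing K ι)
    (hal : ∀ x y z, B (x + y) z = B x z + B y z)
    (har : ∀ x y z, B x (y + z) = B x y + B x z)
    (hsl : ∀ (k : K) x z, B (k • x) z = k • B x z)
    (hsr : ∀ (k : K) x z, B x (k • z) = k • B x z)
    (hll : ∀ x y z, B (x * y) z = x * B y z + B x z * y)
    (hlr : ∀ x y z, B x (y * z) = y * B x z + B x y * z)
    (hgen : ∀ r x s y : ι, B (gen r x) (gen s y)
        = Jlink (pos r) (pos x) (pos s) (pos y)
            • (α • (gen r y * gen s x) + β • (gen r x * gen s y))) :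
    ∀ f g : SwapRing K ι, g ∈ rankIdeal K ι n → B f g ∈ rankIdeal K ι n :=
  rankIdeal_poisson_general K α β n ι pos B hal har hsl hll hlr hgen
end

section
/- In the rank n swapping ring, the (n×n)-determinant ratio E(x₁,…,x_{n−1}| t, y) := Δ((x₁,…,x_{n−1},t),(v₁,…,v_n)) / Δ((x₁,…,x_{n−1},y),(v₁,…,v_n)) ∈ Q_n(P) is independent of the choice of mutually distinct points v₁,…,v_n ∈ P (provided the denominators are nonzero). -/
/-! In `Q_n(P)` every `(n+1) × (n+1)` minor of `(a, b) ↦ ab` vanishes, so once the rows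
`x₁, …, x_{n−1}, y` carry a nonsingular minor, the row of `t` is a linear combination of them
with coefficients that do not depend on the column. By multilinearity of the determinant, both
`Δ((x, t), v)` and `Δ((x, t), v')` are then the coefficient of `y` times `Δ((x, y), v)` resp.
`Δ((x, y), v')`. -/

set_option synthInstance.maxHeartbeats 1000000
set_option maxHeartbeats 4000000

/-- The rank n swapping ring Z_n(P) = Z(P)/R_n(P). -/
abbrev RankRing (K : Type) [Field K] (ι : Type) (n : ℕ) : Type :=
  SwapRing K ι ⧸ rankIdeal K ι n

/-- The fraction field Q_n(P) of the rank n swapping ring. -/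
abbrev RankField (K : Type) [Field K] (ι : Type) (n : ℕ) : Type :=
  FractionRing (RankRing K ι n)

/-- The image of the generator xy in Q_n(P). -/
noncomputable def genR (K : Type) [Field K] (ι : Type) (n : ℕ) (x y : ι) :
    RankField K ι n :=
  algebraMap (RankRing K ι n) (RankField K ι n) (Ideal.Quotient.mk _ (gen x y))

/-- The image of a scalar k ∈ K in Q_n(P). -/
noncomputable def cstR (K : Type) [Field K] (ι : Type) (n : ℕ) (k : K) :
    RankField K ι n :=
  algebraMap (RankRing K ι n) (RankField K ι n) (algebraMap K (RankRing K ι n) k)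

/-- The image of a rational constant in Q_n(P). -/
noncomputable def ratR (K : Type) [Field K] [CharZero K] (ι : Type) (n : ℕ) (q : ℚ) :
    RankField K ι n :=
  cstR K ι n (q • (1 : K))

variable {α β : Type*}

def HasRankAtMost {R : Type*} [CommRing R] (f : α → β → R) (n : ℕ) : Prop :=
  ∀ (a : Fin (n + 1) → α) (b : Fin (n + 1) → β), (Matrix.of fun i j => f (a i) (b j)).det = 0

theorem genR_hasRankAtMost (K : Type) [Field K] (ι : Type) (n : ℕ) :
    HasRankAtMost (genR K ι n) n := by
  intro a b
  let φ := (algebraMap (RankRing K ι n) (RankField K ι n)).comp (Ideal.Quotient.mk _)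
  have hmem : (Matrix.of fun i j => (gen (a i) (b j) : SwapRing K ι)).det ∈ rankIdeal K ι n :=
    Ideal.subset_span ⟨a, b, rfl⟩
  calc (Matrix.of fun i j => genR K ι n (a i) (b j)).det
      = φ (Matrix.of fun i j => (gen (a i) (b j) : SwapRing K ι)).det := by
        rw [RingHom.map_det]; rfl
    _ = 0 := by
        rw [RingHom.comp_apply, Ideal.Quotient.eq_zero_iff_mem.mpr hmem, map_zero]

theorem HasRankAtMost.exists_row_eq_sum {F : Type*} [Field F] {f : α → β → F} {n : ℕ}
    (hf : HasRankAtMost f n) {σ : Fin n → α} {v : Fin n → β}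
    (hN : (Matrix.of fun i j => f (σ i) (v j)).det ≠ 0) (t : α) :
    ∃ c : Fin n → F, ∀ w, f t w = ∑ k, c k * f (σ k) w := by
  -- Laplace expansion of the bordered minor along its last column `w`: the cofactors do not
  -- involve `w`.
  refine ⟨fun k => -((-1) ^ (k + n : ℕ) * (Matrix.of fun r j =>
      f ((Fin.snoc σ t : Fin (n + 1) → α) (k.castSucc.succAbove r)) (v j)).det) /
    (Matrix.of fun i j => f (σ i) (v j)).det, fun w => ?_⟩
  have h := Matrix.det_succ_column (Matrix.of fun i j =>
    f ((Fin.snoc σ t : Fin (n + 1) → α) i) ((Fin.snoc v w : Fin (n + 1) → β) j)) (Fin.last n)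
  rw [hf, Fin.sum_univ_castSucc] at h
  simp only [Fin.val_castSucc, Fin.val_last, Matrix.of_apply, Fin.snoc_castSucc, Fin.snoc_last,
    Matrix.submatrix, Fin.succAbove_last, Even.add_self, Even.neg_pow, one_pow, one_mul] at h
  simp only [div_mul_eq_mul_div, ← Finset.sum_div, eq_div_iff hN, neg_mul, Finset.sum_neg_distrib]
  simp_rw [mul_right_comm _ (Matrix.det _)]
  linear_combination -h

theorem det_snoc_row_eq_mul {R : Type*} [CommRing R] {f : α → β → R} {n : ℕ} {xs : Fin n → α}
    {y t : α} {c : Fin (n + 1) → R}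
    (hc : ∀ w, f t w = ∑ k, c k * f ((Fin.snoc xs y : Fin (n + 1) → α) k) w)
    (v : Fin (n + 1) → β) :
    (Matrix.of fun i j => f ((Fin.snoc xs t : Fin (n + 1) → α) i) (v j)).det
      = c (Fin.last n) *
          (Matrix.of fun i j => f ((Fin.snoc xs y : Fin (n + 1) → α) i) (v j)).det := by
  rw [← smul_eq_mul, ← Matrix.det_updateRow_sum]
  congr 1
  ext i j
  rcases Fin.eq_castSucc_or_eq_last i with ⟨k, rfl⟩ | rfl
  · simp
  · simp [hc]

theorem determinant_ratio_well_defined_general (K : Type) [Field K]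
    (m : ℕ) (ι : Type)
    [IsDomain (RankRing K ι (m + 2))]
    (xs : Fin (m + 1) → ι) (t y : ι)
    (v v' : Fin (m + 2) → ι)
    (hden : Matrix.det (Matrix.of fun s u =>
        genR K ι (m + 2) ((Fin.snoc xs y : Fin (m + 2) → ι) s) (v u)) ≠ 0)
    (hden' : Matrix.det (Matrix.of fun s u =>
        genR K ι (m + 2) ((Fin.snoc xs y : Fin (m + 2) → ι) s) (v' u)) ≠ 0) :
    Matrix.det (Matrix.of fun s u => genR K ι (m + 2) ((Fin.snoc xs t : Fin (m + 2) → ι) s) (v u))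
        / Matrix.det (Matrix.of fun s u => genR K ι (m + 2) ((Fin.snoc xs y : Fin (m + 2) → ι) s) (v u))
      = Matrix.det (Matrix.of fun s u => genR K ι (m + 2) ((Fin.snoc xs t : Fin (m + 2) → ι) s) (v' u))
          / Matrix.det (Matrix.of fun s u => genR K ι (m + 2) ((Fin.snoc xs y : Fin (m + 2) → ι) s) (v' u)) := by
  obtain ⟨c, hc⟩ := (genR_hasRankAtMost K ι (m + 2)).exists_row_eq_sum hden t
  rw [det_snoc_row_eq_mul hc v, det_snoc_row_eq_mul hc v', mul_div_cancel_right₀ _ hden,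
    mul_div_cancel_right₀ _ hden']

/-- In the rank n swapping ring (n = m+2 ≥ 2), the (n×n)-determinant ratio
E(x₁,…,x_{n−1}| t, y) = Δ((x₁,…,x_{n−1},t),(v₁,…,v_n)) / Δ((x₁,…,x_{n−1},y),(v₁,…,v_n))
in Q_n(P) is independent of the choice of mutually distinct v₁,…,v_n ∈ P
(provided the denominators are nonzero). -/
theorem determinant_ratio_well_defined (K : Type) [Field K] [CharZero K]
    (m : ℕ) (ι : Type) [Fintype ι] (pos : ι → ℝ) (hpos : Function.Injective pos)
    [IsDomain (RankRing K ι (m + 2))]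
    (xs : Fin (m + 1) → ι) (t y : ι)
    (hxy : Function.Injective (Fin.snoc xs y : Fin (m + 2) → ι))
    (v v' : Fin (m + 2) → ι) (hv : Function.Injective v) (hv' : Function.Injective v')
    (hden : Matrix.det (Matrix.of fun s u =>
        genR K ι (m + 2) ((Fin.snoc xs y : Fin (m + 2) → ι) s) (v u)) ≠ 0)
    (hden' : Matrix.det (Matrix.of fun s u =>
        genR K ι (m + 2) ((Fin.snoc xs y : Fin (m + 2) → ι) s) (v' u)) ≠ 0) :
    Matrix.det (Matrix.of fun s u => genR K ι (m + 2) ((Fin.snoc xs t : Fin (m + 2) → ι) s) (v u))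
        / Matrix.det (Matrix.of fun s u => genR K ι (m + 2) ((Fin.snoc xs y : Fin (m + 2) → ι) s) (v u))
      = Matrix.det (Matrix.of fun s u => genR K ι (m + 2) ((Fin.snoc xs t : Fin (m + 2) → ι) s) (v' u))
          / Matrix.det (Matrix.of fun s u => genR K ι (m + 2) ((Fin.snoc xs y : Fin (m + 2) → ι) s) (v' u)) :=
  determinant_ratio_well_defined_general K m ι xs t y v v' hden hden'
end

section
/- Let E(·|·,·) denote (n×n)-determinant ratios in Q_n(P), and let I = {k₁<…<k_n} index points a_{k₁},…,a_{k_n} of P, with i, i' ∈ I and j, j' ∉ I. Then under the (0,1)-swapping bracket, {E(â_i| a_j, a_i), E(â_{i'}| a_{j'}, a_{i'})}_{0,1} = J(a_i a_j, a_{i'} a_{j'}) · E(â_i| a_j, a_i) · E(â_{i'}| a_{j'}, a_{i'}), where â_i denotes the list a_{k₁},…,a_{k_n} with a_i removed. -/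
set_option synthInstance.maxHeartbeats 1000000
set_option maxHeartbeats 4000000

/-- The (n×n)-determinant ratio
E = Δ((num₁,…,num_n),(v₁,…,v_n)) / Δ((den₁,…,den_n),(v₁,…,v_n)) ∈ Q_n(P). -/
noncomputable def Eratio (K : Type) [Field K] (ι : Type) (n : ℕ)
    [IsDomain (RankRing K ι n)] (num den v : Fin n → ι) : RankField K ι n :=
  Matrix.det (Matrix.of fun s u => genR K ι n (num s) (v u))
    / Matrix.det (Matrix.of fun s u => genR K ι n (den s) (v u))


/-!
Both determinant ratios are log-canonical for the bracket. Writing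
`J(rx, sy) = κ(r,s) - κ(r,y) - κ(x,s) + κ(x,y)` with `κ(a,b) = -½ sgn(a - b)`, the coefficient of
the bracket of two generators splits into a part depending only on the rows and one depending only
on the columns. Hence every monomial of a minor `Δ((x₁,…,x_m),(v₁,…,v_m))` has the same bracket
with a generator, and then with another minor: the bracket of two minors is the product of the
minors times `∑ κ(xₛ, yₜ) - ∑ κ(xₛ, wₜ) - ∑ κ(vₛ, yₜ) + ∑ κ(vₛ, wₜ)`. Log-canonical brackets pass
to quotients by subtracting coefficients; for the two ratios all terms cancel except those
involving the two changed rows, which add up to `J(aᵢaⱼ, a_{i'}a_{j'})`.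
-/

theorem sgnq_mul_sgnq_mul_sgnq (r x s : ℝ) :
    sgnq (r - x) * sgnq (r - s) * sgnq (s - x) = sgnq (r - s) - sgnq (x - s) - sgnq (r - x) := by
  have sgnq_sub : ∀ a b : ℝ, sgnq (a - b) = if a < b then -1 else if a = b then 0 else 1 := by
    intro a b
    simp only [sgnq, sub_neg, sub_eq_zero]
  simp only [sgnq_sub]
  rcases lt_trichotomy r x with h₁ | h₁ | h₁ <;>
  rcases lt_trichotomy r s with h₂ | h₂ | h₂ <;>
  rcases lt_trichotomy x s with h₃ | h₃ | h₃ <;>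
  simp only [h₁, h₂, h₃, if_true, if_false, lt_irrefl, ne_of_gt, ne_of_lt, lt_asymm] <;>
  first | (exfalso; linarith) | norm_num

theorem Jlink_eq (r x s y : ℝ) :
    Jlink r x s y = -(1/2) * (sgnq (r - s) - sgnq (r - y) - sgnq (x - s) + sgnq (x - y)) := by
  rw [Jlink]
  linear_combination
    (1/2 : ℚ) * sgnq_mul_sgnq_mul_sgnq r x y - (1/2 : ℚ) * sgnq_mul_sgnq_mul_sgnq r x s

theorem ratR_eq_algebraMap (K : Type) [Field K] [CharZero K] (ι : Type) (n : ℕ) (q : ℚ) :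
    ratR K ι n q = algebraMap K (RankField K ι n) q := by
  rw [ratR, cstR, Rat.smul_one_eq_cast, ← IsScalarTower.algebraMap_apply]

structure IsBiderivation {A : Type*} [CommRing A] (B : A → A → A) : Prop where
  add_left : ∀ x y z, B (x + y) z = B x z + B y z
  add_right : ∀ x y z, B x (y + z) = B x y + B x z
  mul_left : ∀ x y z, B (x * y) z = x * B y z + B x z * y
  mul_right : ∀ x y z, B x (y * z) = y * B x z + B x y * z

namespace IsBiderivation

variable {A : Type*} [CommRing A] {B : A → A → A}

theorem swap (hB : IsBiderivation B) : IsBiderivation (Function.swap B) where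
  add_left x y z := hB.add_right z x y
  add_right x y z := hB.add_left y z x
  mul_left x y z := hB.mul_right z x y
  mul_right x y z := hB.mul_left y z x

def leftHom (hB : IsBiderivation B) (y : A) : A →+ A :=
  AddMonoidHom.mk' (B · y) fun x x' => hB.add_left x x' y

theorem one_left (hB : IsBiderivation B) (y : A) : B 1 y = 0 := by
  have h := hB.mul_left 1 1 y
  simp only [mul_one, one_mul] at h
  linear_combination -h

theorem prod_left (hB : IsBiderivation B) {ι : Type*} (S : Finset ι) (f c : ι → A) {y : A}
    (h : ∀ s ∈ S, B (f s) y = c s * (f s * y)) :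
    B (∏ s ∈ S, f s) y = (∑ s ∈ S, c s) * ((∏ s ∈ S, f s) * y) := by
  classical
  induction S using Finset.cons_induction with
  | empty => simp [hB.one_left]
  | cons s S hs ih =>
    rw [Finset.prod_cons, Finset.sum_cons, hB.mul_left,
      ih fun t ht => h t (Finset.mem_cons_of_mem ht), h s (Finset.mem_cons_self s S)]
    ring

theorem det_left (hB : IsBiderivation B) {m : Type*} [Fintype m] [DecidableEq m]
    (M : Matrix m m A) (α β : m → A) {y : A}
    (h : ∀ s u, B (M s u) y = (α s + β u) * (M s u * y)) :
    B M.det y = (∑ s, α s + ∑ u, β u) * (M.det * y) := by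
  change hB.leftHom y M.det = _
  rw [Matrix.det_apply, map_sum, Finset.sum_mul, Finset.mul_sum]
  refine Finset.sum_congr rfl fun σ _ => ?_
  have hcoef : ∑ i, (α (σ i) + β i) = ∑ s, α s + ∑ u, β u := by
    rw [Finset.sum_add_distrib, Equiv.sum_comp σ α]
  rw [Units.smul_def, map_zsmul, smul_mul_assoc, mul_smul_comm, ← hcoef]
  exact congrArg _ (hB.prod_left Finset.univ _ _ fun i _ => h (σ i) i)

theorem det_right (hB : IsBiderivation B) {m : Type*} [Fintype m] [DecidableEq m]
    (M : Matrix m m A) (α β : m → A) {y : A}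
    (h : ∀ s u, B y (M s u) = (α s + β u) * (y * M s u)) :
    B y M.det = (∑ s, α s + ∑ u, β u) * (y * M.det) := by
  rw [mul_comm y]
  exact hB.swap.det_left M α β fun s u => by rw [Function.swap, h, mul_comm y]

section Field

variable {A : Type*} [Field A] {B : A → A → A}

theorem div_left (hB : IsBiderivation B) {x y z c d : A} (hy : y ≠ 0)
    (hx : B x z = c * (x * z)) (hyz : B y z = d * (y * z)) :
    B (x / y) z = (c - d) * (x / y * z) := by
  have h := hB.mul_left (x / y) y z
  have hxy : x / y * y = x := div_mul_cancel₀ x hy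
  rw [hxy, hx, hyz] at h
  apply mul_right_cancel₀ hy
  linear_combination -h - c * z * hxy

theorem div_right (hB : IsBiderivation B) {x y z c d : A} (hy : y ≠ 0)
    (hx : B z x = c * (z * x)) (hyz : B z y = d * (z * y)) :
    B z (x / y) = (c - d) * (z * (x / y)) := by
  rw [mul_comm z]
  exact hB.swap.div_left hy (by rw [Function.swap, hx, mul_comm z])
    (by rw [Function.swap, hyz, mul_comm z])

theorem div_div (hB : IsBiderivation B) {N D N' D' c₁ c₂ c₃ c₄ : A} (hD : D ≠ 0) (hD' : D' ≠ 0)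
    (h₁ : B N N' = c₁ * (N * N')) (h₂ : B N D' = c₂ * (N * D'))
    (h₃ : B D N' = c₃ * (D * N')) (h₄ : B D D' = c₄ * (D * D')) :
    B (N / D) (N' / D') = (c₁ - c₂ - c₃ + c₄) * (N / D * (N' / D')) := by
  rw [hB.div_right hD' (hB.div_left hD h₁ h₃) (hB.div_left hD h₂ h₄)]
  ring

end Field

end IsBiderivation

def pairSum {A ι m m' : Type*} [AddCommMonoid A] [Fintype m] [Fintype m'] (κ : ι → ι → A)
    (x : m → ι) (y : m' → ι) : A :=
  ∑ s, ∑ t, κ (x s) (y t)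

def minor {A ι m : Type*} [CommRing A] [Fintype m] [DecidableEq m] (γ : ι → ι → A)
    (x v : m → ι) : A :=
  (Matrix.of fun s u => γ (x s) (v u)).det

section PairSum

variable {A ι m m' : Type*} [AddCommGroup A] [Fintype m] [Fintype m']

theorem sum_comp_update_sub [DecidableEq m] (f : ι → A) (x : m → ι) (l : m) (p : ι) :
    ∑ s, f (Function.update x l p s) - ∑ s, f (x s) = f p - f (x l) := by
  have hl := Finset.mem_univ l
  rw [← Function.comp_def f, Function.comp_update, Finset.sum_update_of_mem hl,
    Finset.sum_eq_add_sum_sdiff_singleton_of_mem hl]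
  simp only [Function.comp_apply]
  abel

theorem pairSum_update_left_sub [DecidableEq m] (κ : ι → ι → A) (x : m → ι) (y : m' → ι)
    (l : m) (p : ι) :
    pairSum κ (Function.update x l p) y - pairSum κ x y = ∑ t, (κ p (y t) - κ (x l) (y t)) := by
  rw [pairSum, pairSum, sum_comp_update_sub (fun i => ∑ t, κ i (y t)), Finset.sum_sub_distrib]

theorem pairSum_update_update [DecidableEq m] [DecidableEq m'] (κ : ι → ι → A) (x : m → ι)
    (y : m' → ι) (l : m) (l' : m') (p q : ι) :
    pairSum κ (Function.update x l p) (Function.update y l' q) - pairSum κ (Function.update x l p) y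
        - pairSum κ x (Function.update y l' q) + pairSum κ x y
      = κ p q - κ p (y l') - κ (x l) q + κ (x l) (y l') := by
  have hrow := congrArg₂ (· - ·) (pairSum_update_left_sub κ x (Function.update y l' q) l p)
    (pairSum_update_left_sub κ x y l p)
  have hcol := sum_comp_update_sub (fun i => κ p i - κ (x l) i) y l' q
  linear_combination (norm := abel) hrow + hcol

end PairSum

section Minors

variable {A ι m m' : Type*} [CommRing A] [Fintype m] [Fintype m'] {B : A → A → A}
  {γ κ : ι → ι → A}

theorem IsBiderivation.apply_minor_gen [DecidableEq m] (hB : IsBiderivation B)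
    (hγ : ∀ p q u w, B (γ p q) (γ u w) = (κ p u - κ p w - κ q u + κ q w) * (γ p q * γ u w))
    (x v : m → ι) (c d : ι) :
    B (minor γ x v) (γ c d)
      = (∑ s, (κ (x s) c - κ (x s) d) - ∑ u, (κ (v u) c - κ (v u) d)) * (minor γ x v * γ c d) := by
  rw [minor, hB.det_left _ (fun s => κ (x s) c - κ (x s) d) (fun u => κ (v u) d - κ (v u) c)
    fun s u => by rw [Matrix.of_apply, hγ]; ring]
  simp only [Finset.sum_sub_distrib]
  ring

theorem IsBiderivation.apply_minor_minor [DecidableEq m] [DecidableEq m']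
    (hB : IsBiderivation B)
    (hγ : ∀ p q u w, B (γ p q) (γ u w) = (κ p u - κ p w - κ q u + κ q w) * (γ p q * γ u w))
    (x v : m → ι) (y w : m' → ι) :
    B (minor γ x v) (minor γ y w)
      = (pairSum κ x y - pairSum κ x w - pairSum κ v y + pairSum κ v w)
          * (minor γ x v * minor γ y w) := by
  have h := hB.det_right (Matrix.of fun t u => γ (y t) (w u)) (y := minor γ x v)
    (fun t => ∑ s, κ (x s) (y t) - ∑ u, κ (v u) (y t))
    (fun t => ∑ u, κ (v u) (w t) - ∑ s, κ (x s) (w t))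
    fun t u => by
      rw [Matrix.of_apply, hB.apply_minor_gen hγ x v]
      simp only [Finset.sum_sub_distrib]
      ring
  rw [show (Matrix.of fun t u => γ (y t) (w u)).det = minor γ y w from rfl] at h
  rw [h]
  simp only [pairSum, Finset.sum_sub_distrib, Finset.sum_comm (γ := m')]
  ring

end Minors

theorem Eratio_eq_minor_div (K : Type) [Field K] (ι : Type) (n : ℕ) [IsDomain (RankRing K ι n)]
    (num den v : Fin n → ι) :
    Eratio K ι n num den v = minor (genR K ι n) num v / minor (genR K ι n) den v :=
  rfl

theorem swapping_bracket01_det_ratios_general (K : Type) [Field K] [CharZero K]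
    (n r : ℕ) (a : Fin r → ℝ)
    [IsDomain (RankRing K (Fin r) n)]
    (B : RankField K (Fin r) n → RankField K (Fin r) n → RankField K (Fin r) n)
    (hal : ∀ x y z, B (x + y) z = B x z + B y z)
    (har : ∀ x y z, B x (y + z) = B x y + B x z)
    (hll : ∀ x y z, B (x * y) z = x * B y z + B x z * y)
    (hlr : ∀ x y z, B x (y * z) = y * B x z + B x y * z)
    (hgen : ∀ p q u w : Fin r, B (genR K (Fin r) n p q) (genR K (Fin r) n u w)
        = ratR K (Fin r) n (Jlink (a p) (a q) (a u) (a w))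
            * (genR K (Fin r) n p q * genR K (Fin r) n u w))
    (Ifun : Fin n → Fin r)
    (l l' : Fin n) (j j' : Fin r)
    (v : Fin n → Fin r)
    (hden : Matrix.det (Matrix.of fun s u => genR K (Fin r) n (Ifun s) (v u)) ≠ 0) :
    B (Eratio K (Fin r) n (Function.update Ifun l j) Ifun v)
        (Eratio K (Fin r) n (Function.update Ifun l' j') Ifun v)
      = ratR K (Fin r) n (Jlink (a (Ifun l)) (a j) (a (Ifun l')) (a j'))
          * (Eratio K (Fin r) n (Function.update Ifun l j) Ifun v
              * Eratio K (Fin r) n (Function.update Ifun l' j') Ifun v) := by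
  have hB : IsBiderivation B := ⟨hal, har, hll, hlr⟩
  let κ (p u : Fin r) : RankField K (Fin r) n :=
    algebraMap K _ ((-(1/2) * sgnq (a p - a u) : ℚ) : K)
  have hJ : ∀ p q u w, ratR K (Fin r) n (Jlink (a p) (a q) (a u) (a w))
      = κ p u - κ p w - κ q u + κ q w := by
    intro p q u w
    simp only [ratR_eq_algebraMap, Jlink_eq, κ, ← map_sub, ← map_add]
    push_cast
    ring
  have hγ : ∀ p q u w, B (genR K (Fin r) n p q) (genR K (Fin r) n u w)
      = (κ p u - κ p w - κ q u + κ q w) * (genR K (Fin r) n p q * genR K (Fin r) n u w) :=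
    fun p q u w => by rw [hgen, hJ]
  have hD : minor (genR K (Fin r) n) Ifun v ≠ 0 := hden
  simp only [Eratio_eq_minor_div]
  have hminor := hB.apply_minor_minor hγ (m := Fin n) (m' := Fin n)
  rw [hB.div_div hD hD (hminor ..) (hminor ..) (hminor ..) (hminor ..), hJ]
  congr 1
  linear_combination pairSum_update_update κ Ifun Ifun l l' j j'

/-- Under the (0,1)-swapping bracket on Q_n(P), for i, i' ∈ I and j, j' ∉ I,
{E(âᵢ|aⱼ,aᵢ), E(â_{i'}|a_{j'},a_{i'})}₀,₁
  = J(aᵢaⱼ, a_{i'}a_{j'}) · E(âᵢ|aⱼ,aᵢ) · E(â_{i'}|a_{j'},a_{i'}). -/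
theorem swapping_bracket01_det_ratios (K : Type) [Field K] [CharZero K]
    (n r : ℕ) (hn : 2 ≤ n) (a : Fin r → ℝ) (ha : StrictMono a)
    [IsDomain (RankRing K (Fin r) n)]
    (B : RankField K (Fin r) n → RankField K (Fin r) n → RankField K (Fin r) n)
    (hal : ∀ x y z, B (x + y) z = B x z + B y z)
    (har : ∀ x y z, B x (y + z) = B x y + B x z)
    (hll : ∀ x y z, B (x * y) z = x * B y z + B x z * y)
    (hlr : ∀ x y z, B x (y * z) = y * B x z + B x y * z)
    (hgen : ∀ p q u w : Fin r, B (genR K (Fin r) n p q) (genR K (Fin r) n u w)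
        = ratR K (Fin r) n (Jlink (a p) (a q) (a u) (a w))
            * (genR K (Fin r) n p q * genR K (Fin r) n u w))
    (Ifun : Fin n → Fin r) (hIfun : StrictMono Ifun)
    (l l' : Fin n) (j j' : Fin r)
    (hj : j ∉ Set.range Ifun) (hj' : j' ∉ Set.range Ifun)
    (v : Fin n → Fin r) (hv : Function.Injective v)
    (hden : Matrix.det (Matrix.of fun s u => genR K (Fin r) n (Ifun s) (v u)) ≠ 0) :
    B (Eratio K (Fin r) n (Function.update Ifun l j) Ifun v)
        (Eratio K (Fin r) n (Function.update Ifun l' j') Ifun v)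
      = ratR K (Fin r) n (Jlink (a (Ifun l)) (a j) (a (Ifun l')) (a j'))
          * (Eratio K (Fin r) n (Function.update Ifun l j) Ifun v
              * Eratio K (Fin r) n (Function.update Ifun l' j') Ifun v) :=
  swapping_bracket01_det_ratios_general K n r a B hal har hll hlr hgen Ifun l l' j j' v hden
end
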